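/- There exists ε₀ ∈ (0,1) such that for every ε ∈ (0, ε₀], every θ ∈ [0, π], and all reals a, b with |a − cos θ| ≤ ε and |b − 1| ≤ ε, one has |arccos(a/b) − θ| ≤ 2·√(5ε). In other words, for ε sufficiently small, ρ_ε ≤ 2√(5ε) is a valid noise radius: arccos((cos θ ± ε)/(1 ± ε)) = θ ± 2√(5ε). -/

import Mathlib

/-!
Dividing by `b ≈ 1` moves `cos θ` by at most `2ε / (1 - ε)`. On the other hand, for
`0 ≤ r ≤ θ ≤ π` one has `cos (θ - r) - cos θ ≥ 1 - cos r`, so a perturbation of `cos θ` by at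
most `1 - cos r` moves `arccos` by at most `r`; and `1 - cos r ≥ r ^ 2 / 8`, which for
`r = 2√(5ε)` is `5ε / 2 ≥ 2ε / (1 - ε)` as soon as `ε ≤ 1 / 5`.
-/

open Real Set

lemma abs_div_sub_le {a b c ε : ℝ} (hc : |c| ≤ 1) (ha : |a - c| ≤ ε) (hb : |b - 1| ≤ ε)
    (hε : ε < 1) : |a / b - c| ≤ 2 * ε / (1 - ε) := by
  have hb' : 1 - ε ≤ b := by linarith [(abs_le.mp hb).1]
  have hbpos : 0 < b := by linarith
  have hnum : |a - c + c * (1 - b)| ≤ 2 * ε :=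
    calc |a - c + c * (1 - b)| ≤ |a - c| + |c| * |1 - b| := by
          rw [← abs_mul]; exact abs_add_le _ _
      _ ≤ ε + 1 * ε := by
          rw [abs_sub_comm] at hb; gcongr
      _ = 2 * ε := by ring
  calc |a / b - c| = |a - c + c * (1 - b)| / b := by
        rw [← abs_of_pos hbpos, ← abs_div, abs_of_pos hbpos]; congr 1; field_simp; ring
    _ ≤ 2 * ε / (1 - ε) := by gcongr; linarith [abs_nonneg (a - c)]

lemma cos_add_one_sub_cos_le_cos_sub {θ r : ℝ} (hr : 0 ≤ r) (hrθ : r ≤ θ) (hθ : θ ≤ π) :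
    cos θ + (1 - cos r) ≤ cos (θ - r) := by
  have hsq : cos θ + 1 = 2 * cos (θ / 2) ^ 2 := by
    rw [cos_sq, mul_div_cancel₀ θ two_ne_zero]; ring
  have hsum : cos (θ - r) + cos r = 2 * cos (θ / 2) * cos (θ / 2 - r) := by
    rw [cos_add_cos]; ring_nf
  have hhalf : 0 ≤ cos (θ / 2) := cos_nonneg_of_mem_Icc ⟨by linarith, by linarith⟩
  have hmono : cos (θ / 2) ≤ cos (θ / 2 - r) := by
    rw [← cos_abs (θ / 2 - r)]
    exact cos_le_cos_of_nonneg_of_le_pi (abs_nonneg _) (by linarith)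
      (abs_le.mpr ⟨by linarith, by linarith⟩)
  nlinarith

lemma sub_le_arccos_of_le_cos_add {x θ r : ℝ} (hθ : θ ≤ π) (hr : 0 ≤ r)
    (hx : x ≤ cos θ + (1 - cos r)) : θ - r ≤ arccos x := by
  rcases lt_or_ge θ r with hθr | hrθ
  · linarith [arccos_nonneg x]
  · calc θ - r = arccos (cos (θ - r)) := (arccos_cos (by linarith) (by linarith)).symm
      _ ≤ arccos x := antitone_arccos (hx.trans (cos_add_one_sub_cos_le_cos_sub hr hrθ hθ))

lemma arccos_le_add_of_cos_sub_le {x θ r : ℝ} (hθ : 0 ≤ θ) (hr : 0 ≤ r)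
    (hx : cos θ - (1 - cos r) ≤ x) : arccos x ≤ θ + r := by
  have h := sub_le_arccos_of_le_cos_add (x := -x) (θ := π - θ) (by linarith) hr
    (by rw [cos_pi_sub]; linarith)
  rw [arccos_neg] at h
  linarith

lemma abs_arccos_sub_le {x θ r : ℝ} (hθ : θ ∈ Icc 0 π) (hr : 0 ≤ r)
    (hx : |x - cos θ| ≤ 1 - cos r) : |arccos x - θ| ≤ r := by
  obtain ⟨hx₁, hx₂⟩ := abs_le.mp hx
  exact abs_le.mpr ⟨by linarith [sub_le_arccos_of_le_cos_add hθ.2 hr (x := x) (by linarith)],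
    by linarith [arccos_le_add_of_cos_sub_le hθ.1 hr (x := x) (by linarith)]⟩

lemma sq_div_eight_le_one_sub_cos {x : ℝ} (hx : |x| ≤ π) : x ^ 2 / 8 ≤ 1 - cos x := by
  have h := cos_le_one_sub_mul_cos_sq hx
  have hπ : 2 / π ^ 2 * x ^ 2 ≥ x ^ 2 / 8 := by
    rw [ge_iff_le, div_mul_eq_mul_div, div_le_div_iff₀ (by norm_num) (by positivity)]
    have hπ16 : π ^ 2 ≤ 16 := by nlinarith [pi_pos, pi_lt_four]
    nlinarith [mul_le_mul_of_nonneg_left hπ16 (sq_nonneg x)]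
  linarith

theorem stmt_9 :
    ∃ ε0 : ℝ, 0 < ε0 ∧ ε0 < 1 ∧
      ∀ ε : ℝ, 0 < ε → ε ≤ ε0 →
      ∀ θ : ℝ, θ ∈ Set.Icc 0 Real.pi →
      ∀ a b : ℝ, |a - Real.cos θ| ≤ ε → |b - 1| ≤ ε →
      |Real.arccos (a / b) - θ| ≤ 2 * Real.sqrt (5 * ε) := by
  refine ⟨1 / 5, by norm_num, by norm_num, fun ε hε hε0 θ hθ a b ha hb => ?_⟩
  set r := 2 * √(5 * ε)
  have hr0 : 0 ≤ r := by positivity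
  have hr2 : r ^ 2 = 20 * ε := by
    rw [mul_pow, sq_sqrt (by linarith)]; ring
  have hrπ : |r| ≤ π := by
    have : √(5 * ε) ≤ 1 := sqrt_le_one.mpr (by linarith)
    rw [abs_of_nonneg hr0]; linarith [pi_gt_three]
  apply abs_arccos_sub_le hθ hr0
  calc |a / b - cos θ| ≤ 2 * ε / (1 - ε) := abs_div_sub_le (abs_cos_le_one θ) ha hb (by linarith)
    _ ≤ r ^ 2 / 8 := by
        rw [hr2, div_le_div_iff₀ (by linarith) (by norm_num)]; nlinarith
    _ ≤ 1 - cos r := sq_div_eight_le_one_sub_cos hrπ
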